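/- arXiv:1301.5910 — 2 statements merged into one kernel-verified Lean document; each statement's English description precedes it below -/
import Mathlib

section
/- Let r ≥ 3 and let e_1,...,e_r be complex numbers. Suppose that Φ_{e_{s(1)},...,e_{s(r)}}(x) = x as rational functions for every permutation s of {1,...,r}. Then e_1 = e_2 = ... = e_r. -/
open Matrix

/-- The 2×2 matrix of the Möbius transformation `x ↦ 1/(e - x)`. -/
noncomputable def mobA (e : ℂ) : Matrix (Fin 2) (Fin 2) ℂ := !![0, 1; -1, e]

/-- The matrix of the continued fraction Möbius transformation
`Φ_{e₁,…,e_r}(x) = 1/(e_r - 1/(e_{r-1} - ⋯ - 1/(e₁ - x)))`, for the list `[e₁, …, e_r]`. -/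
noncomputable def phiL (l : List ℂ) : Matrix (Fin 2) (Fin 2) ℂ :=
  l.foldl (fun M e => mobA e * M) 1

/-- `M` and `N` define the same Möbius transformation (equality as rational functions). -/
def MobiusEq (M N : Matrix (Fin 2) (Fin 2) ℂ) : Prop := ∃ c : ℂ, c ≠ 0 ∧ M = c • N

/-- `M` defines the identity Möbius transformation `x ↦ x`. -/
def IsMobiusId (M : Matrix (Fin 2) (Fin 2) ℂ) : Prop := MobiusEq M 1

/-
Φ_{e_1,…,e_r} is the matrix product A(e_r)⋯A(e_1) with A(e) = [[0,1],[-1,e]] of determinant 1.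
If two orderings that differ by swapping the first two entries a, b both give the identity,
cancelling the common invertible left factor shows that A(b)A(a) and A(a)A(b) are
proportional, and their top rows (-1, a) and (-1, b) force a = b. Applied to the orderings
starting e_0, e_k this gives e_k = e_0 for every k.
-/

lemma foldl_mobA_mul (l : List ℂ) (M : Matrix (Fin 2) (Fin 2) ℂ) :
    l.foldl (fun M e => mobA e * M) M = phiL l * M := by
  induction l generalizing M with
  | nil => simp [phiL]
  | cons a l ih =>
    rw [List.foldl_cons, ih, phiL.eq_1 (a :: l), List.foldl_cons, ih, Matrix.mul_one,
      Matrix.mul_assoc]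

lemma phiL_cons (a : ℂ) (l : List ℂ) : phiL (a :: l) = phiL l * mobA a := by
  rw [phiL, List.foldl_cons, foldl_mobA_mul, Matrix.mul_one]

lemma det_mobA (a : ℂ) : (mobA a).det = 1 := by
  simp [mobA, Matrix.det_fin_two_of]

lemma det_phiL (l : List ℂ) : (phiL l).det = 1 := by
  induction l with
  | nil => simp [phiL]
  | cons a l ih => rw [phiL_cons, Matrix.det_mul, ih, det_mobA, one_mul]

lemma mobiusEq_of_isMobiusId_mul {P M N : Matrix (Fin 2) (Fin 2) ℂ} (hP : IsUnit P.det)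
    (hM : IsMobiusId (P * M)) (hN : IsMobiusId (P * N)) : MobiusEq M N := by
  obtain ⟨c, hc, hPM⟩ := hM
  obtain ⟨d, hd, hPN⟩ := hN
  refine ⟨c / d, div_ne_zero hc hd, ?_⟩
  rw [← nonsing_inv_mul_cancel_left P M hP, ← nonsing_inv_mul_cancel_left P N hP, hPM, hPN,
    Matrix.mul_smul, Matrix.mul_smul, smul_smul, div_mul_cancel₀ c hd]

lemma mobA_mul_mobA (a b : ℂ) : mobA a * mobA b = !![-1, b; -a, a * b - 1] := by
  simp [mobA, sub_eq_neg_add]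

lemma eq_of_mobiusEq_mobA_mul_swap {a b : ℂ} (h : MobiusEq (mobA a * mobA b) (mobA b * mobA a)) :
    a = b := by
  obtain ⟨c, -, hc⟩ := h
  rw [mobA_mul_mobA, mobA_mul_mobA] at hc
  have hc1 : 1 = c := by simpa using congrFun (congrFun hc 0) 0
  have hba : b = a := by simpa [← hc1] using congrFun (congrFun hc 0) 1
  exact hba.symm

lemma eq_of_isMobiusId_phiL_cons_cons {a b : ℂ} {l : List ℂ}
    (hab : IsMobiusId (phiL (a :: b :: l))) (hba : IsMobiusId (phiL (b :: a :: l))) : a = b := by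
  simp only [phiL_cons, Matrix.mul_assoc] at hab hba
  have hP : IsUnit (phiL l).det := by simp [det_phiL]
  exact eq_of_mobiusEq_mobA_mul_swap (mobiusEq_of_isMobiusId_mul hP hba hab)

lemma eq_of_isMobiusId_ofFn_swap {n : ℕ} (f : Fin (n + 2) → ℂ)
    (hf : IsMobiusId (phiL (List.ofFn f)))
    (hswap : IsMobiusId (phiL (List.ofFn fun i => f (Equiv.swap 0 1 i)))) : f 0 = f 1 := by
  simp only [List.ofFn_succ] at hf hswap
  have htail (i : Fin n) : Equiv.swap 0 1 i.succ.succ = i.succ.succ :=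
    Equiv.swap_apply_of_ne_of_ne (Fin.succ_ne_zero _) (Fin.succ_succ_ne_one i)
  refine eq_of_isMobiusId_phiL_cons_cons hf ?_
  simpa [htail] using hswap

theorem stmt_5_general (r : ℕ) (e : Fin r → ℂ)
    (h : ∀ s : Equiv.Perm (Fin r), IsMobiusId (phiL (List.ofFn fun i => e (s i)))) :
    ∀ i j, e i = e j := by
  obtain hr | ⟨n, rfl⟩ : r ≤ 1 ∨ ∃ n, r = n + 2 := by
    rcases le_or_gt r 1 with hr | hr
    exacts [.inl hr, .inr ⟨r - 2, by omega⟩]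
  · have : Subsingleton (Fin r) := Fin.subsingleton_iff_le_one.mpr hr
    exact fun i j => congrArg e (Subsingleton.elim i j)
  have h_zero (k : Fin (n + 2)) : e 0 = e k := by
    rcases eq_or_ne k 0 with rfl | hk
    · rfl
    have hs0 : Equiv.swap 1 k 0 = 0 := Equiv.swap_apply_of_ne_of_ne Fin.zero_ne_one hk.symm
    simpa [hs0] using eq_of_isMobiusId_ofFn_swap (fun i => e (Equiv.swap 1 k i))
      (h (Equiv.swap 1 k)) (h (Equiv.swap 1 k * Equiv.swap 0 1))
  exact fun i j => (h_zero i).symm.trans (h_zero j)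

/-- Let `r ≥ 3` and `e₁,…,e_r ∈ ℂ`.  If `Φ_{e_{s(1)},…,e_{s(r)}}(x) = x` as rational
functions for every permutation `s`, then `e₁ = e₂ = ⋯ = e_r`. -/
theorem stmt_5 (r : ℕ) (hr : 3 ≤ r) (e : Fin r → ℂ)
    (h : ∀ s : Equiv.Perm (Fin r), IsMobiusId (phiL (List.ofFn fun i => e (s i)))) :
    ∀ i j, e i = e j :=
  stmt_5_general r e h
end

section
/- Let e_1,...,e_r be integers with Φ_{e_{s(1)},...,e_{s(r)}}(x) = x for all permutations s, and suppose e := e_1 = ... = e_r satisfies e ∉ {-1,0,1}. Then with b_k defined by the recursion b_k = z_{k-1} b_{k-1} - b_{k-2}, b_1 = 1, b_2 = z_1, there exists no index 2 ≤ k ≤ r with b_k(e,...,e) = 0 and b_{k-1}(e,...,e) ≠ 0; in particular b_k(e,...,e) ≠ 0 for all 1 ≤ k ≤ r. (This is the divisibility step: if e b_{k-1}(e,...,e) = b_{k-2}(e,...,e), then e divides b_{k-2}(0,...,0) ∈ {-1,0,1}, forcing e ∈ {-1,0,1}.) -/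
open Matrix

/-! For `|e| ≥ 2` the recursion `b_{k+2} = e b_{k+1} - b_k` makes `|b_k|` strictly increasing,
since `|b_{k+2}| ≥ 2 |b_{k+1}| - |b_k| > |b_{k+1}|`; starting from `b_0 = 0`, `b_1 = 1`, no `b_k`
with `k ≥ 1` can vanish. -/

/-- `bseq e k = b_k(e,…,e)`, extended by `b_0 = 0`. -/
def bseq (e : ℤ) : ℕ → ℤ
  | 0 => 0
  | 1 => 1
  | n + 2 => e * bseq e (n + 1) - bseq e n

lemma phiL_replicate_succ (e : ℂ) (k : ℕ) :
    phiL (List.replicate (k + 1) e) = mobA e * phiL (List.replicate k e) := by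
  rw [List.replicate_succ']
  simp [phiL, List.foldl_append]

lemma phiL_replicate_intCast (e : ℤ) (k : ℕ) :
    phiL (List.replicate k (e : ℂ)) =
      !![(bseq e (k + 1) : ℂ) - e * bseq e k, bseq e k; -(bseq e k : ℂ), bseq e (k + 1)] := by
  induction k with
  | zero =>
    ext i j
    fin_cases i <;> fin_cases j <;> simp [phiL, bseq]
  | succ k ih =>
    rw [phiL_replicate_succ, ih, mobA, mul_fin_two, bseq]
    push_cast
    ring_nf

lemma phiL_replicate_intCast_zero_one (e : ℤ) (k : ℕ) :
    phiL (List.replicate k (e : ℂ)) 0 1 = bseq e k := by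
  simp [phiL_replicate_intCast]

lemma abs_bseq_lt_abs_bseq_succ {e : ℤ} (he : 2 ≤ |e|) (k : ℕ) :
    |bseq e k| < |bseq e (k + 1)| := by
  induction k with
  | zero => simp [bseq]
  | succ k ih =>
    have hsub : |e * bseq e (k + 1)| - |bseq e k| ≤ |bseq e (k + 2)| :=
      abs_sub_abs_le_abs_sub _ _
    rw [abs_mul] at hsub
    nlinarith [abs_nonneg (bseq e (k + 1))]

lemma bseq_ne_zero {e : ℤ} (he : 2 ≤ |e|) {k : ℕ} (hk : k ≠ 0) : bseq e k ≠ 0 := by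
  obtain ⟨k, rfl⟩ := Nat.exists_eq_succ_of_ne_zero hk
  have hlt := abs_bseq_lt_abs_bseq_succ he k
  exact abs_pos.mp ((abs_nonneg _).trans_lt hlt)

theorem stmt_13_general (r : ℕ) (e : ℤ)
    (he : e ∉ ({-1, 0, 1} : Set ℤ)) :
    (¬ ∃ k, 2 ≤ k ∧ k ≤ r ∧ (phiL (List.replicate k (e : ℂ))) 0 1 = 0 ∧
        (phiL (List.replicate (k - 1) (e : ℂ))) 0 1 ≠ 0) ∧
    ∀ k, 1 ≤ k → k ≤ r → (phiL (List.replicate k (e : ℂ))) 0 1 ≠ 0 := by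
  have habs : 2 ≤ |e| := by
    by_contra! h
    rcases Int.abs_le_one_iff.mp (by omega : |e| ≤ 1) with rfl | rfl | rfl <;> simp at he
  have hne : ∀ k, 1 ≤ k → phiL (List.replicate k (e : ℂ)) 0 1 ≠ 0 := fun k hk => by
    rw [phiL_replicate_intCast_zero_one]
    exact_mod_cast bseq_ne_zero habs (by omega)
  exact ⟨fun ⟨k, hk2, _, hk0, _⟩ => hne k (by omega) hk0, fun k hk _ => hne k hk⟩

/-- Let `e₁ = ⋯ = e_r = e` be integers with `Φ_{e,…,e}(x) = x` as rational functions (which,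
the tuple being constant, is the hypothesis for every permutation), and suppose
`e ∉ {-1, 0, 1}`.  Then, with `b_k` the `(0,1)` entry of the matrix of `Φ_{e,…,e}` (`k` times),
there is no index `2 ≤ k ≤ r` with `b_k(e,…,e) = 0` and `b_{k-1}(e,…,e) ≠ 0`; in particular
`b_k(e,…,e) ≠ 0` for all `1 ≤ k ≤ r`. -/
theorem stmt_13 (r : ℕ) (hr : 1 ≤ r) (e : ℤ)
    (hperm : IsMobiusId (phiL (List.replicate r (e : ℂ))))
    (he : e ∉ ({-1, 0, 1} : Set ℤ)) :
    (¬ ∃ k, 2 ≤ k ∧ k ≤ r ∧ (phiL (List.replicate k (e : ℂ))) 0 1 = 0 ∧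
        (phiL (List.replicate (k - 1) (e : ℂ))) 0 1 ≠ 0) ∧
    ∀ k, 1 ≤ k → k ≤ r → (phiL (List.replicate k (e : ℂ))) 0 1 ≠ 0 :=
  stmt_13_general r e he
end
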